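/- Let ℏ, m, g, E₀, N > 0, set κ = √(2mE₀)/ℏ, and for each n ≥ 0 define ψₙ : (ℝ³)ⁿ → ℂ by ψₙ(y₁,…,yₙ) = N (−gm)ⁿ / ((2πℏ²)ⁿ √(n!)) ∏_{j=1}^n e^{−κ|y_j|}/|y_j| (with ψ₀ = N). Then for every n ≥ 0 and every (y₁,…,yₙ) ∈ (ℝ³)ⁿ with all y_j ≠ 0, the eigenvalue equation holds: −(ℏ²/2m) Σ_{j=1}^n Δ_{y_j} ψₙ(y₁,…,yₙ) + n E₀ ψₙ(y₁,…,yₙ) + (g√(n+1)/4π) ∫_{S²} lim_{r→0} ∂_r [ r ψ_{n+1}(y₁,…,yₙ, rω) ] d²ω = E_min ψₙ(y₁,…,yₙ), where E_min = g² m √(2mE₀) / (2πℏ³). In other words, the explicitly given dressed state ψ_min is an eigenfunction of the interior–boundary-condition Hamiltonian with eigenvalue E_min, sector by sector away from the boundary. -/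

import Mathlib

open Real Complex Filter MeasureTheory Metric

/-- The Laplacian of a complex-valued function on `ℝ³`, as the sum of the second
partial derivatives in the coordinate directions. -/
noncomputable def laplacianC (f : EuclideanSpace ℝ (Fin 3) → ℂ)
    (y : EuclideanSpace ℝ (Fin 3)) : ℂ :=
  ∑ i : Fin 3,
    fderiv ℝ (fun z => fderiv ℝ f z (EuclideanSpace.single i 1)) y
      (EuclideanSpace.single i 1)

/-- The sectors of the dressed ground state of the van Hove-type IBC model:
`ψₙ(y₁,…,yₙ) = N (−gm)ⁿ/((2πℏ²)ⁿ √n!) ∏ⱼ e^{−κ|yⱼ|}/|yⱼ|`. -/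
noncomputable def dressedState (ℏ m g κ N : ℝ) (n : ℕ)
    (y : Fin n → EuclideanSpace ℝ (Fin 3)) : ℂ :=
  ((N * (-(g * m)) ^ n / ((2 * π * ℏ ^ 2) ^ n * Real.sqrt (Nat.factorial n)) *
      ∏ j, Real.exp (-(κ * ‖y j‖)) / ‖y j‖ : ℝ) : ℂ)

/-!
Each sector `ψₙ` is a constant times a product of Yukawa potentials `e^{-κr}/r`, and away from
the origin these solve `Δu = κ²u` (radial Laplacian `u'' + 2u'/r`). Hence the kinetic term
contributes `-n ℏ²κ²/(2m) ψₙ = -n E₀ ψₙ`, which cancels the creation energy. In the boundary term,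
`r ψₙ₊₁(yⁿ, rω)` is a constant multiple of `e^{-κr}`, so its radial derivative tends to `-κ` times
that constant, independently of `ω`; integrating over the sphere (area `4π`) and inserting the
ratio `-gm/(2πℏ²√(n+1))` of consecutive normalisations leaves exactly `E_min ψₙ`.
-/

open Topology

theorem hasFDerivAt_norm_of_ne_zero {F : Type*} [NormedAddCommGroup F] [InnerProductSpace ℝ F]
    {x : F} (hx : x ≠ 0) : HasFDerivAt (‖·‖) (‖x‖⁻¹ • innerSL ℝ x) x := by
  have h := (hasDerivAt_sqrt (pow_ne_zero 2 (norm_ne_zero_iff.2 hx))).comp_hasFDerivAt x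
    (hasStrictFDerivAt_norm_sq x).hasFDerivAt
  simp only [Function.comp_def, Real.sqrt_sq (norm_nonneg _)] at h
  refine h.congr_fderiv ?_
  ext v
  simp only [smul_apply, coe_innerSL_apply, nsmul_eq_mul, smul_eq_mul]
  ring

theorem fderiv_ofReal_apply {E : Type*} [NormedAddCommGroup E] [NormedSpace ℝ E]
    {F : E → ℝ} {F' : E →L[ℝ] ℝ} {x : E} (hF : HasFDerivAt F F' x) (v : E) :
    fderiv ℝ (fun z => (F z : ℂ)) x v = F' v :=
  congrArg (· v) (ofRealCLM.hasFDerivAt.comp x hF).fderiv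

theorem laplacianC_radial {u u' : ℝ → ℝ} {u'' : ℝ} {y : EuclideanSpace ℝ (Fin 3)} (hy : y ≠ 0)
    (hu : ∀ᶠ r in 𝓝 ‖y‖, HasDerivAt u (u' r) r) (hu' : HasDerivAt u' u'' ‖y‖) :
    laplacianC (fun z => (u ‖z‖ : ℂ)) y = (u'' + 2 * u' ‖y‖ / ‖y‖ : ℝ) := by
  have hy' : ‖y‖ ≠ 0 := norm_ne_zero_iff.2 hy
  have hgrad : ∀ i, (fun z => fderiv ℝ (fun z => (u ‖z‖ : ℂ)) z (EuclideanSpace.single i 1))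
      =ᶠ[𝓝 y] fun z => ((u' ‖z‖ / ‖z‖ * z i : ℝ) : ℂ) := by
    intro i
    filter_upwards [isOpen_ne.mem_nhds hy, continuous_norm.continuousAt.eventually hu]
      with z hz huz
    rw [fderiv_ofReal_apply (F := fun z => u ‖z‖)
      (huz.comp_hasFDerivAt z (hasFDerivAt_norm_of_ne_zero hz))]
    congr 1
    simp only [smul_apply, coe_innerSL_apply,
      EuclideanSpace.inner_single_right, conj_trivial, one_mul, smul_eq_mul]
    ring
  have hh : HasDerivAt (fun r => u' r / r) ((u'' * ‖y‖ - u' ‖y‖) / ‖y‖ ^ 2) ‖y‖ :=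
    (hu'.div (hasDerivAt_id' _) hy').congr_deriv (by ring)
  have hhess : ∀ i, fderiv ℝ (fun z => fderiv ℝ (fun z => (u ‖z‖ : ℂ)) z
      (EuclideanSpace.single i 1)) y (EuclideanSpace.single i 1)
        = (((u'' * ‖y‖ - u' ‖y‖) / ‖y‖ ^ 3 * y i ^ 2 + u' ‖y‖ / ‖y‖ : ℝ) : ℂ) := by
    intro i
    have hcoord : HasFDerivAt (fun z : EuclideanSpace ℝ (Fin 3) => z i)
        (EuclideanSpace.proj (𝕜 := ℝ) i) y := PiLp.hasFDerivAt_apply 2 y i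
    have hradial : HasFDerivAt (fun z : EuclideanSpace ℝ (Fin 3) => u' ‖z‖ / ‖z‖)
        (((u'' * ‖y‖ - u' ‖y‖) / ‖y‖ ^ 2) • (‖y‖⁻¹ • innerSL ℝ y)) y :=
      hh.comp_hasFDerivAt y (hasFDerivAt_norm_of_ne_zero hy)
    have hprod : HasFDerivAt (fun z : EuclideanSpace ℝ (Fin 3) => u' ‖z‖ / ‖z‖ * z i) _ y :=
      hradial.mul hcoord
    rw [(hgrad i).fderiv_eq, fderiv_ofReal_apply hprod]
    congr 1
    simp only [add_apply, smul_apply, PiLp.proj_apply,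
      PiLp.single_eq_same, coe_innerSL_apply, EuclideanSpace.inner_single_right, conj_trivial, one_mul,
      smul_eq_mul]
    ring
  simp only [laplacianC, hhess]
  rw [← ofReal_sum, Finset.sum_add_distrib, ← Finset.mul_sum, ← EuclideanSpace.real_norm_sq_eq,
    Finset.sum_const, Finset.card_univ, Fintype.card_fin, nsmul_eq_mul]
  congr 1
  field_simp
  ring

noncomputable def yukawa (κ r : ℝ) : ℝ := Real.exp (-(κ * r)) / r

theorem hasDerivAt_exp_neg_mul (κ r : ℝ) :
    HasDerivAt (fun r => Real.exp (-(κ * r))) (-(κ * Real.exp (-(κ * r)))) r := by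
  simpa [mul_comm] using ((hasDerivAt_id r).const_mul κ).neg.exp

theorem hasDerivAt_yukawa (κ : ℝ) {r : ℝ} (hr : r ≠ 0) :
    HasDerivAt (yukawa κ) (-(Real.exp (-(κ * r)) * (κ * r + 1)) / r ^ 2) r :=
  ((hasDerivAt_exp_neg_mul κ r).div (hasDerivAt_id r) hr).congr_deriv (by simp only [id]; ring)

theorem hasDerivAt_yukawa_deriv (κ : ℝ) {r : ℝ} (hr : r ≠ 0) :
    HasDerivAt (fun r => -(Real.exp (-(κ * r)) * (κ * r + 1)) / r ^ 2)
      (Real.exp (-(κ * r)) * (κ ^ 2 * r ^ 2 + 2 * κ * r + 2) / r ^ 3) r := by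
  have hlin : HasDerivAt (fun r => κ * r + 1) κ r := by
    simpa using ((hasDerivAt_id r).const_mul κ).add_const 1
  refine (((hasDerivAt_exp_neg_mul κ r).mul hlin).neg.div (hasDerivAt_pow 2 r)
    (pow_ne_zero 2 hr)).congr_deriv ?_
  simp only [Pi.neg_apply, Pi.mul_apply]
  field_simp
  ring

theorem laplacianC_yukawa (κ a : ℝ) {y : EuclideanSpace ℝ (Fin 3)} (hy : y ≠ 0) :
    laplacianC (fun z => ((a * yukawa κ ‖z‖ : ℝ) : ℂ)) y
      = ((κ ^ 2 * (a * yukawa κ ‖y‖) : ℝ) : ℂ) := by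
  have hy' : ‖y‖ ≠ 0 := norm_ne_zero_iff.2 hy
  rw [laplacianC_radial hy
    (Filter.mem_of_superset (isOpen_ne.mem_nhds hy') fun r hr =>
      (hasDerivAt_yukawa κ hr).const_mul a)
    ((hasDerivAt_yukawa_deriv κ hy').const_mul a)]
  congr 1
  simp only [yukawa]
  field_simp
  ring

theorem limUnder_deriv_nhdsGT_of_eqOn {E : Type*} [NormedAddCommGroup E] [NormedSpace ℝ E]
    {f h : ℝ → E} {a : ℝ} (hfh : Set.EqOn f h (Set.Ioi a)) (hh : ContDiff ℝ 1 h) :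
    limUnder (𝓝[>] a) (deriv f) = deriv h a := by
  have hderiv : deriv h =ᶠ[𝓝[>] a] deriv f := eventually_nhdsWithin_of_forall fun r hr =>
    ((Filter.eventuallyEq_of_mem (isOpen_Ioi.mem_nhds hr) hfh).deriv_eq).symm
  exact ((((hh.continuous_deriv le_rfl).tendsto a).mono_left nhdsWithin_le_nhds).congr'
    hderiv).limUnder_eq

theorem toSphere_real_univ_fin_three :
    (volume : Measure (EuclideanSpace ℝ (Fin 3))).toSphere.real Set.univ = 4 * π := by
  rw [measureReal_def, Measure.toSphere_apply_univ, EuclideanSpace.volume_ball_fin_three]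
  simp only [finrank_euclideanSpace_fin, ENNReal.ofReal_one, one_pow, one_mul,
    ENNReal.toReal_mul, ENNReal.toReal_natCast,
    ENNReal.toReal_ofReal (by positivity : 0 ≤ π * 4 / 3)]
  ring

section DressedState

variable (ℏ m g κ N : ℝ)

noncomputable def dressedCoeff (n : ℕ) : ℝ :=
  N * (-(g * m)) ^ n / ((2 * π * ℏ ^ 2) ^ n * Real.sqrt (Nat.factorial n))

theorem dressedState_eq (n : ℕ) (y : Fin n → EuclideanSpace ℝ (Fin 3)) :
    dressedState ℏ m g κ N n y = ((dressedCoeff ℏ m g N n * ∏ j, yukawa κ ‖y j‖ : ℝ) : ℂ) :=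
  rfl

theorem dressedCoeff_succ (n : ℕ) :
    dressedCoeff ℏ m g N (n + 1)
      = dressedCoeff ℏ m g N n * (-(g * m) / (2 * π * ℏ ^ 2 * Real.sqrt (n + 1))) := by
  rw [dressedCoeff, dressedCoeff, Nat.factorial_succ, Nat.cast_mul, Nat.cast_succ,
    Real.sqrt_mul (by positivity)]
  ring

theorem dressedState_update {n : ℕ} (y : Fin n → EuclideanSpace ℝ (Fin 3)) (j : Fin n)
    (z : EuclideanSpace ℝ (Fin 3)) :
    dressedState ℏ m g κ N n (Function.update y j z)
      = (((dressedCoeff ℏ m g N n * ∏ k ∈ Finset.univ.erase j, yukawa κ ‖y k‖) * yukawa κ ‖z‖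
          : ℝ) : ℂ) := by
  have hrest : ∀ k ∈ Finset.univ.erase j, Function.update y j z k = y k := fun k hk =>
    Function.update_of_ne (Finset.ne_of_mem_erase hk) z y
  rw [dressedState_eq, ← Finset.mul_prod_erase _ _ (Finset.mem_univ j), Function.update_self,
    Finset.prod_congr rfl fun k hk => by rw [hrest k hk]]
  congr 1
  ring

theorem laplacianC_dressedState_update {n : ℕ} {y : Fin n → EuclideanSpace ℝ (Fin 3)}
    {j : Fin n} (hy : y j ≠ 0) :
    laplacianC (fun z => dressedState ℏ m g κ N n (Function.update y j z)) (y j)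
      = (κ : ℂ) ^ 2 * dressedState ℏ m g κ N n y := by
  rw [funext (dressedState_update ℏ m g κ N y j), laplacianC_yukawa κ _ hy, dressedState_eq,
    ← Finset.prod_erase_mul _ _ (Finset.mem_univ j)]
  push_cast
  ring

theorem mul_dressedState_snoc_smul {n : ℕ} (y : Fin n → EuclideanSpace ℝ (Fin 3))
    {ω : EuclideanSpace ℝ (Fin 3)} (hω : ‖ω‖ = 1) {s : ℝ} (hs : 0 < s) :
    (s : ℂ) * dressedState ℏ m g κ N (n + 1) (Fin.snoc y (s • ω))
      = ((dressedCoeff ℏ m g N (n + 1) * (∏ j, yukawa κ ‖y j‖) * Real.exp (-(κ * s)) : ℝ)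
          : ℂ) := by
  rw [dressedState_eq, ← ofReal_mul, Fin.prod_univ_castSucc]
  simp only [Fin.snoc_castSucc, Fin.snoc_last, norm_smul, hω, mul_one, Real.norm_of_nonneg hs.le,
    yukawa]
  congr 1
  field_simp

theorem limUnder_deriv_mul_dressedState_snoc_smul {n : ℕ} (y : Fin n → EuclideanSpace ℝ (Fin 3))
    {ω : EuclideanSpace ℝ (Fin 3)} (hω : ‖ω‖ = 1) :
    limUnder (𝓝[>] 0)
        (deriv fun s : ℝ => (s : ℂ) * dressedState ℏ m g κ N (n + 1) (Fin.snoc y (s • ω)))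
      = ((-(κ * (dressedCoeff ℏ m g N (n + 1) * ∏ j, yukawa κ ‖y j‖)) : ℝ) : ℂ) := by
  set c := dressedCoeff ℏ m g N (n + 1) * ∏ j, yukawa κ ‖y j‖
  have hsmooth : ContDiff ℝ 1 fun s => c * Real.exp (-(κ * s)) := by fun_prop
  rw [limUnder_deriv_nhdsGT_of_eqOn (h := fun s => ((c * Real.exp (-(κ * s)) : ℝ) : ℂ))
      (fun s hs => mul_dressedState_snoc_smul ℏ m g κ N y hω hs) (ofRealCLM.contDiff.comp hsmooth),
    ((hasDerivAt_exp_neg_mul κ 0).const_mul c).ofReal_comp.deriv]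
  rw [mul_zero, neg_zero, Real.exp_zero, mul_one, mul_neg, mul_comm]

end DressedState

theorem dressedState_eigenfunction_general
    (ℏ m g E₀ N : ℝ) (hℏ : 0 < ℏ) (hm : 0 < m) (hE₀ : 0 < E₀)
    (κ : ℝ) (hκdef : κ = Real.sqrt (2 * m * E₀) / ℏ) :
    ∀ (n : ℕ) (y : Fin n → EuclideanSpace ℝ (Fin 3)), (∀ j, y j ≠ 0) →
      -((ℏ : ℂ) ^ 2 / (2 * (m : ℂ))) *
          (∑ j : Fin n,
            laplacianC (fun z => dressedState ℏ m g κ N n (Function.update y j z)) (y j))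
        + ((n : ℝ) * E₀ : ℝ) * dressedState ℏ m g κ N n y
        + ((g * Real.sqrt ((n : ℝ) + 1) / (4 * π)) : ℝ) *
            ∫ ω : sphere (0 : EuclideanSpace ℝ (Fin 3)) 1,
              limUnder (nhdsWithin 0 (Set.Ioi 0))
                (fun r : ℝ =>
                  deriv (fun s : ℝ =>
                    (s : ℂ) * dressedState ℏ m g κ N (n + 1)
                      (Fin.snoc y (s • (ω : EuclideanSpace ℝ (Fin 3))))) r)
              ∂((volume : Measure (EuclideanSpace ℝ (Fin 3))).toSphere)
      = ((g ^ 2 * m * Real.sqrt (2 * m * E₀) / (2 * π * ℏ ^ 3)) : ℝ) *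
          dressedState ℏ m g κ N n y := by
  intro n y hy
  have hlap : ∑ j, laplacianC (fun z => dressedState ℏ m g κ N n (Function.update y j z)) (y j)
      = n * (κ : ℂ) ^ 2 * dressedState ℏ m g κ N n y := by
    simp [laplacianC_dressedState_update ℏ m g κ N (hy _), mul_assoc]
  have hbdry : ∫ ω : sphere (0 : EuclideanSpace ℝ (Fin 3)) 1,
      limUnder (𝓝[>] 0) (fun r : ℝ => deriv (fun s : ℝ => (s : ℂ) * dressedState ℏ m g κ N (n + 1)
        (Fin.snoc y (s • (ω : EuclideanSpace ℝ (Fin 3))))) r)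
      ∂((volume : Measure (EuclideanSpace ℝ (Fin 3))).toSphere)
      = ((4 * π : ℝ) : ℂ) * ((-(κ * (dressedCoeff ℏ m g N (n + 1) * ∏ j, yukawa κ ‖y j‖)) : ℝ)
          : ℂ) := by
    simp_rw [limUnder_deriv_mul_dressedState_snoc_smul ℏ m g κ N y (norm_eq_of_mem_sphere _)]
    rw [integral_const, toSphere_real_univ_fin_three, real_smul]
  rw [hlap, hbdry, dressedState_eq, dressedCoeff_succ]
  have hS : Real.sqrt (2 * m * E₀) ^ 2 = 2 * m * E₀ := Real.sq_sqrt (by positivity)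
  subst hκdef
  norm_cast
  have hsqrt : √((n + 1 : ℕ) : ℝ) ≠ 0 := by positivity
  field_simp
  linear_combination (-(ℏ ^ 3 * n * dressedCoeff ℏ m g N n *
    (∏ j, yukawa (√(2 * m * E₀) / ℏ) ‖y j‖) * π)) * hS

/-- **The dressed state is an eigenfunction of the IBC Hamiltonian of the van Hove-type
model, sector by sector away from the boundary, with eigenvalue
`E_min = g²m√(2mE₀)/(2πℏ³)`.** Here the Hamiltonian acts on the `n`-particle sector by
`(Hψ)(yⁿ) = −(ℏ²/2m) Σⱼ Δ_{yⱼ} ψ(yⁿ) + n E₀ ψ(yⁿ)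
  + (g√(n+1)/4π) ∫_{S²} lim_{r→0} ∂_r [r ψ(yⁿ, rω)] d²ω`,
`d²ω` being the surface measure on the unit sphere `S² ⊆ ℝ³`. -/
theorem dressedState_eigenfunction
    (ℏ m g E₀ N : ℝ) (hℏ : 0 < ℏ) (hm : 0 < m) (hg : 0 < g) (hE₀ : 0 < E₀) (hN : 0 < N)
    (κ : ℝ) (hκdef : κ = Real.sqrt (2 * m * E₀) / ℏ) :
    ∀ (n : ℕ) (y : Fin n → EuclideanSpace ℝ (Fin 3)), (∀ j, y j ≠ 0) →
      -((ℏ : ℂ) ^ 2 / (2 * (m : ℂ))) *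
          (∑ j : Fin n,
            laplacianC (fun z => dressedState ℏ m g κ N n (Function.update y j z)) (y j))
        + ((n : ℝ) * E₀ : ℝ) * dressedState ℏ m g κ N n y
        + ((g * Real.sqrt ((n : ℝ) + 1) / (4 * π)) : ℝ) *
            ∫ ω : sphere (0 : EuclideanSpace ℝ (Fin 3)) 1,
              limUnder (nhdsWithin 0 (Set.Ioi 0))
                (fun r : ℝ =>
                  deriv (fun s : ℝ =>
                    (s : ℂ) * dressedState ℏ m g κ N (n + 1)
                      (Fin.snoc y (s • (ω : EuclideanSpace ℝ (Fin 3))))) r)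
              ∂((volume : Measure (EuclideanSpace ℝ (Fin 3))).toSphere)
      = ((g ^ 2 * m * Real.sqrt (2 * m * E₀) / (2 * π * ℏ ^ 3)) : ℝ) *
          dressedState ℏ m g κ N n y :=
  dressedState_eigenfunction_general ℏ m g E₀ N hℏ hm hE₀ κ hκdef
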